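/- Under the conditions l ∈ (0,1) and l < u < min(1, l/(1-l)), the inequality φ(a/u)/u + φ(a) - φ(a/l)/l ≥ φ(a)·exp(a^2(1-1/l^2)/2)·(l + l/u - 1)/l holds for all real a, and the right-hand side is strictly positive. -/

import Mathlib

/-!
Writing `φ a · exp (a²(1 - 1/l²)/2) = φ (a/l)`, the lower bound becomes
`φ (a/l) + φ (a/l)/u - φ (a/l)/l`, and the inequality follows from `φ (a/l) ≤ φ a` and
`φ (a/l) ≤ φ (a/u)`, both because `|a/l|` dominates `|a|` and `|a/u|` when `0 < l < u ≤ 1`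
and the Gaussian decreases in `|x|`. Positivity comes from `l + l/u - 1 > 0`, which is
the condition `u < l/(1 - l)`.
-/

open Real

lemma exp_neg_sq_half_mul_exp {l : ℝ} (hl : l ≠ 0) (a : ℝ) :
    exp (-a ^ 2 / 2) * exp (a ^ 2 * (1 - 1 / l ^ 2) / 2) = exp (-(a / l) ^ 2 / 2) := by
  rw [← exp_add]
  congr 1
  field_simp
  ring

lemma exp_neg_sq_div_half_le {s t : ℝ} (hs : 0 < s) (hst : s ≤ t) (a : ℝ) :
    exp (-(a / s) ^ 2 / 2) ≤ exp (-(a / t) ^ 2 / 2) := by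
  have hsq : (a / t) ^ 2 ≤ (a / s) ^ 2 := by
    rw [div_pow, div_pow]
    exact div_le_div_of_nonneg_left (sq_nonneg a) (by positivity) (by gcongr)
  gcongr

lemma add_div_sub_one_pos {l u : ℝ} (hl : l < 1) (hu : 0 < u) (hul : u < l / (1 - l)) :
    0 < l + l / u - 1 := by
  have h : u * (1 - l) < l := (lt_div_iff₀ (by linarith)).mp hul
  have : 1 - l < l / u := (lt_div_iff₀ hu).mpr (by linarith)
  linarith

lemma mul_add_div_sub_one_div_le {x y z l u : ℝ} (hl : l ≠ 0) (hu : 0 < u)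
    (hyx : y ≤ x) (hyz : y ≤ z) :
    y * (l + l / u - 1) / l ≤ z / u + x - y / l := by
  have hexpand : y * (l + l / u - 1) / l = y + y / u - y / l := by
    field_simp
  have : y / u ≤ z / u := by gcongr
  linarith

/-- For `l ∈ (0,1)` and `l < u < min(1, l/(1-l))`:
`φ(a/u)/u + φ(a) - φ(a/l)/l ≥ φ(a)·exp(a²(1-1/l²)/2)·(l + l/u - 1)/l` for all real `a`,
and the right-hand side is strictly positive. -/
theorem stmt10 (l u : ℝ) (hl : l ∈ Set.Ioo (0 : ℝ) 1) (hlu : l < u)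
    (hu : u < min 1 (l / (1 - l))) :
    let φ : ℝ → ℝ := fun x => (Real.sqrt (2 * Real.pi))⁻¹ * Real.exp (-x ^ 2 / 2)
    (∀ a : ℝ, φ a * Real.exp (a ^ 2 * (1 - 1 / l ^ 2) / 2) * (l + l / u - 1) / l ≤
      φ (a / u) / u + φ a - φ (a / l) / l) ∧
    (∀ a : ℝ, 0 < φ a * Real.exp (a ^ 2 * (1 - 1 / l ^ 2) / 2) * (l + l / u - 1) / l) := by
  intro φ
  obtain ⟨hl0, hl1⟩ := hl
  have hu0 : 0 < u := hl0.trans hlu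
  have hscale (a : ℝ) : φ a * exp (a ^ 2 * (1 - 1 / l ^ 2) / 2) = φ (a / l) := by
    simp only [φ, mul_assoc, exp_neg_sq_half_mul_exp hl0.ne']
  have hmono {s t : ℝ} (hs : 0 < s) (hst : s ≤ t) (a : ℝ) : φ (a / s) ≤ φ (a / t) := by
    exact mul_le_mul_of_nonneg_left (exp_neg_sq_div_half_le hs hst a) (by positivity)
  have hpos : 0 < l + l / u - 1 :=
    add_div_sub_one_pos hl1 hu0 (hu.trans_le (min_le_right _ _))
  refine ⟨fun a => ?_, fun a => ?_⟩
  · rw [hscale]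
    exact mul_add_div_sub_one_div_le hl0.ne' hu0
      (by simpa using hmono hl0 hl1.le a) (hmono hl0 hlu.le a)
  · rw [hscale]
    simp only [φ]
    positivity
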